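/- arXiv:0806.2264 — 4 statements merged into one kernel-verified Lean document; each statement's English description precedes it below -/
import Mathlib

section
/- (Löwenheim–Skolem theorem for graph models) For every graph model G there exists a graph model G' whose web is a countable total subpair of the web of G and such that Th_⊑(G') = Th_⊑(G); hence also Th(G') = Th(G). -/
universe u v

/-- Untyped λ-terms in de Bruijn notation (over the countably infinite
supply of variables `ℕ`). -/
inductive Term : Type
  | var : ℕ → Term
  | app : Term → Term → Term
  | lam : Term → Term
  deriving DecidableEq

namespace Term

/-- Shift the free variables `≥ d` up by one. -/
def lift (d : ℕ) : Term → Term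
  | var n => if n < d then var n else var (n + 1)
  | app M N => app (lift d M) (lift d N)
  | lam M => lam (lift (d + 1) M)

/-- Capture-avoiding substitution of `N` for the free variable `k`. -/
def subst : Term → ℕ → Term → Term
  | var n, k, N => if n = k then N else if k < n then var (n - 1) else var n
  | app P Q, k, N => app (subst P k N) (subst Q k N)
  | lam P, k, N => lam (subst P (k + 1) (lift 0 N))

/-- One-step β-reduction. -/
inductive Step : Term → Term → Prop
  | beta (M N : Term) : Step (app (lam M) N) (subst M 0 N)
  | appL {M M' : Term} (N : Term) : Step M M' → Step (app M N) (app M' N)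
  | appR (M : Term) {N N' : Term} : Step N N' → Step (app M N) (app M N')
  | abs {M M' : Term} : Step M M' → Step (lam M) (lam M')

/-- β-conversion: the least equivalence relation containing one-step β-reduction. -/
inductive BetaConv : Term → Term → Prop
  | of {M N : Term} : Step M N → BetaConv M N
  | refl (M : Term) : BetaConv M M
  | symm {M N : Term} : BetaConv M N → BetaConv N M
  | trans {M N P : Term} : BetaConv M N → BetaConv N P → BetaConv M P

/-- All free variables are `< d`. -/
def BoundedBy : Term → ℕ → Prop
  | var n, d => n < d
  | app M N, d => BoundedBy M d ∧ BoundedBy N d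
  | lam M, d => BoundedBy M (d + 1)

/-- Closed λ-terms. -/
def Closed (M : Term) : Prop := BoundedBy M 0

/-- Terms of the form `y M₁ ⋯ Mₖ` (a variable applied to arguments). -/
inductive IsVarApp : Term → Prop
  | var (n : ℕ) : IsVarApp (var n)
  | app {M : Term} (N : Term) : IsVarApp M → IsVarApp (app M N)

/-- Head normal forms `λx₁…xₙ. y M₁ ⋯ Mₖ`. -/
inductive IsHnf : Term → Prop
  | head {M : Term} : IsVarApp M → IsHnf M
  | abs {M : Term} : IsHnf M → IsHnf (lam M)

/-- A λ-term is solvable if it is β-convertible to a head normal form. -/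
def Solvable (M : Term) : Prop := ∃ N, BetaConv M N ∧ IsHnf N

/-- Unsolvable λ-terms. -/
def Unsolvable (M : Term) : Prop := ¬ Solvable M

/-- β-normal forms: terms containing no β-redex. -/
def IsNormal : Term → Prop
  | var _ => True
  | lam M => IsNormal M
  | app M N => (∀ P, M ≠ lam P) ∧ IsNormal M ∧ IsNormal N

/-- A fixed effective bijective Gödel numbering of λ-terms. -/
def code : Term → ℕ
  | var n => 3 * n
  | app M N => 3 * Nat.pair (code M) (code N) + 1
  | lam M => 3 * code M + 2

/-- `δ = λx.xx`. -/
def delta : Term := lam (app (var 0) (var 0))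

/-- `Ω = (λx.xx)(λx.xx)`. -/
def Omega : Term := app delta delta

/-- `I = λx.x`. -/
def Idt : Term := lam (var 0)

end Term

open Term

/-- A set of λ-terms is r.e. if its set of Gödel codes is r.e. -/
def TermSetRe (V : Set Term) : Prop := REPred fun n : ℕ => ∃ M ∈ V, code M = n

/-- A set of λ-terms is co-r.e. if its set of Gödel codes is co-r.e.; since the
numbering is bijective this means that the code set of the complement is r.e. -/
def TermSetCoRe (V : Set Term) : Prop := TermSetRe Vᶜ

/-- β-co-r.e. sets: co-r.e. sets of λ-terms closed under β-conversion. -/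
def BetaCoRe (V : Set Term) : Prop :=
  (∀ M N, M ∈ V → BetaConv M N → N ∈ V) ∧ TermSetCoRe V

/-- A set of pairs of λ-terms is r.e. if the corresponding set of codes of
pairs is r.e. -/
def PairsRe (T : Set (Term × Term)) : Prop :=
  REPred fun n : ℕ => ∃ p ∈ T, Nat.pair (code p.1) (code p.2) = n

/-- λ-theories: congruences on Λ containing β-conversion. -/
def IsLambdaTheory (T : Term → Term → Prop) : Prop :=
  Equivalence T ∧
  (∀ M M' N N', T M M' → T N N' → T (Term.app M N) (Term.app M' N')) ∧
  (∀ M M', T M M' → T (Term.lam M) (Term.lam M')) ∧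
  (∀ M N, BetaConv M N → T M N)

/-- Partial pairs (as raw data): a carrier set together with a partial map `j`,
given as an `Option`-valued map on pairs of a subset and an element. -/
structure PrePair (α : Type u) : Type u where
  carrier : Set α
  j : Set α × α → Option α

namespace PrePair

variable {α : Type u}

/-- The defining conditions of a partial pair: the carrier is non-empty and `j`
is a partial injection `A* × A ⇀ A`. -/
def Valid (P : PrePair α) : Prop :=
  P.carrier.Nonempty ∧
  (∀ a x y, P.j (a, x) = some y →
      a.Finite ∧ a ⊆ P.carrier ∧ x ∈ P.carrier ∧ y ∈ P.carrier) ∧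
  (∀ p q y, P.j p = some y → P.j q = some y → p = q)

/-- Total pairs: `j` is defined on every pair of a finite subset of the
carrier and an element of the carrier. -/
def Total (P : PrePair α) : Prop :=
  ∀ a x, a.Finite → a ⊆ P.carrier → x ∈ P.carrier → ∃ y, P.j (a, x) = some y

/-- Webs of graph models: total pairs with infinite carrier. -/
def IsGraphModel (P : PrePair α) : Prop := P.Valid ∧ P.Total ∧ P.carrier.Infinite

/-- The subpair relation `A ⊑ B`. -/
def Subpair (P Q : PrePair α) : Prop :=
  P.carrier ⊆ Q.carrier ∧ ∀ p y, P.j p = some y → Q.j p = some y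

end PrePair

/-- Consing a value onto an environment (de Bruijn style). -/
def envCons {α : Type u} (s : Set α) (ρ : ℕ → Set α) : ℕ → Set α
  | 0 => s
  | n + 1 => ρ n

/-- The interpretation of a λ-term with respect to a partial pair and an
environment. -/
def interp {α : Type u} (P : PrePair α) : Term → (ℕ → Set α) → Set α
  | Term.var n, ρ => ρ n
  | Term.app M N, ρ =>
      {y | ∃ a : Set α, a.Finite ∧ a ⊆ interp P N ρ ∧
        ∃ z, P.j (a, y) = some z ∧ z ∈ interp P M ρ}
  | Term.lam M, ρ =>
      {y | ∃ (a : Set α) (x : α), a.Finite ∧ P.j (a, x) = some y ∧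
        x ∈ interp P M (envCons a ρ)}

/-- The interpretation of a closed λ-term. -/
def interpC {α : Type u} (P : PrePair α) (M : Term) : Set α :=
  interp P M fun _ => (∅ : Set α)

/-- The order theory of (the graph model generated by) a pair. -/
def ThLe {α : Type u} (P : PrePair α) : Set (Term × Term) :=
  {p | ∀ ρ : ℕ → Set α, (∀ n, ρ n ⊆ P.carrier) → interp P p.1 ρ ⊆ interp P p.2 ρ}

/-- The equational theory of (the graph model generated by) a pair. -/
def Th {α : Type u} (P : PrePair α) : Set (Term × Term) :=
  {p | ∀ ρ : ℕ → Set α, (∀ n, ρ n ⊆ P.carrier) → interp P p.1 ρ = interp P p.2 ρ}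

/-- Morphisms of partial pairs. -/
def IsMorphism {α : Type u} {β : Type v} (P : PrePair α) (Q : PrePair β)
    (f : α → β) : Prop :=
  Set.MapsTo f P.carrier Q.carrier ∧
  ∀ a x y, a ⊆ P.carrier → x ∈ P.carrier → P.j (a, x) = some y →
    Q.j (f '' a, f x) = some (f y)

/-- Isomorphisms of partial pairs: morphisms which are bijections between the
carriers and whose inverse is also a morphism. -/
def IsIso {α : Type u} {β : Type v} (P : PrePair α) (Q : PrePair β)
    (f : α → β) : Prop :=
  IsMorphism P Q f ∧
  ∃ g : β → α, IsMorphism Q P g ∧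
    (∀ x ∈ P.carrier, g (f x) = x) ∧ ∀ y ∈ Q.carrier, f (g y) = y

/-- The ambient type of the free completion: formal copies `base x` of the
original elements together with formal pairs `node`. -/
inductive FC (α : Type u) : Type u
  | base : α → FC α
  | node : List (FC α) → FC α → FC α

namespace FC

variable {α : Type u}

open scoped Classical

/-- A canonical list enumerating a finite set. -/
noncomputable def listOf (s : Set (FC α)) : List (FC α) :=
  if h : s.Finite then h.toFinset.toList else []

/-- The copy of the original carrier inside `FC α`. -/
def baseSet (P : PrePair α) : Set (FC α) := base '' P.carrier

/-- `(a, x)` is the copy of a pair in the domain of `j`. -/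
def IsOldDom (P : PrePair α) (a : Set (FC α)) (x : FC α) : Prop :=
  ∃ (a₀ : Set α) (x₀ : α), a = base '' a₀ ∧ x = base x₀ ∧ (P.j (a₀, x₀)).isSome

/-- The increasing stages `Aₙ` of the free completion:
`A₀ = A` and `A_{n+1} = A ∪ ((Aₙ* × Aₙ) ∖ dom j)`. -/
def stage (P : PrePair α) : ℕ → Set (FC α)
  | 0 => baseSet P
  | n + 1 => baseSet P ∪
      {t | ∃ (a : Set (FC α)) (x : FC α), a.Finite ∧ a ⊆ stage P n ∧
        x ∈ stage P n ∧ ¬ IsOldDom P a x ∧ t = node (listOf a) x}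

/-- The carrier `Ā = ⋃ₙ Aₙ` of the free completion. -/
def compCarrier (P : PrePair α) : Set (FC α) := ⋃ n, stage P n

/-- `y` is the copy of the old value `j (a₀, x₀)`, where `(a, x)` is the copy
of `(a₀, x₀) ∈ dom j`. -/
def OldVal (P : PrePair α) (a : Set (FC α)) (x y : FC α) : Prop :=
  ∃ (a₀ : Set α) (x₀ y₀ : α), a = base '' a₀ ∧ x = base x₀ ∧
    P.j (a₀, x₀) = some y₀ ∧ y = base y₀

/-- The total injection `j̄` of the free completion: it extends `j` and sends
every other pair `(a, α)` of the completion to (the formal copy of) itself. -/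
noncomputable def jbar (P : PrePair α) (p : Set (FC α) × FC α) : Option (FC α) :=
  if p.1.Finite ∧ p.1 ⊆ compCarrier P ∧ p.2 ∈ compCarrier P then
    if h : ∃ y, OldVal P p.1 p.2 y then some h.choose
    else some (node (listOf p.1) p.2)
  else none

end FC

/-- The free completion `Ā` of a partial pair `A`, as a total pair on `FC α`. -/
noncomputable def completion {α : Type u} (P : PrePair α) : PrePair (FC α) :=
  ⟨FC.compCarrier P, FC.jbar P⟩

/-- The fixed effective encoding of finite subsets of `ℕ`. -/
def encF (s : Finset ℕ) : ℕ := s.sum fun i => 2 ^ i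

/-- A partial pair on `ℕ` whose carrier is a decidable set and whose map `j` is
partial recursive with decidable domain (under the fixed effective encoding of
finite sets and pairs). -/
def ConcreteWE (Q : PrePair ℕ) : Prop :=
  ComputablePred (· ∈ Q.carrier) ∧
  ∃ f : ℕ →. ℕ, Nat.Partrec f ∧ ComputablePred (fun n => (f n).Dom) ∧
    ∀ (a : Finset ℕ) (x y : ℕ), Q.j (↑a, x) = some y ↔ y ∈ f (Nat.pair (encF a) x)

/-- The range of `j` is decidable. -/
def ConcreteRange (Q : PrePair ℕ) : Prop :=
  ComputablePred fun y => ∃ p, Q.j p = some y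

/-- Weakly effective partial pairs: partial pairs isomorphic to a partial pair
on `ℕ` with decidable carrier whose `j` is partial recursive with decidable
domain. -/
def WeaklyEffective {α : Type u} (P : PrePair α) : Prop :=
  ∃ Q : PrePair ℕ, ConcreteWE Q ∧ ∃ f : α → ℕ, IsIso P Q f

/-- Effective partial pairs: weakly effective via a pair whose `j` moreover has
decidable range. -/
def EffectivePair {α : Type u} (P : PrePair α) : Prop :=
  ∃ Q : PrePair ℕ, ConcreteWE Q ∧ ConcreteRange Q ∧ ∃ f : α → ℕ, IsIso P Q f

/-- Effective total pairs: total pairs isomorphic to some `(ℕ, ℓ)` with `ℓ`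
total recursive, injective and with decidable range. -/
def EffectiveTotalPair {α : Type u} (P : PrePair α) : Prop :=
  ∃ Q : PrePair ℕ, Q.carrier = Set.univ ∧
    (∃ f : ℕ → ℕ, Computable f ∧ Function.Injective f ∧
      ComputablePred (fun y => ∃ n, f n = y) ∧
      ∀ (a : Finset ℕ) (x : ℕ), Q.j (↑a, x) = some (f (Nat.pair (encF a) x))) ∧
    ∃ h : α → ℕ, IsIso P Q h

/-! The interpretation is continuous: `y ∈ ⟦M⟧ρ` is witnessed by a finite part of `ρ` and by
finitely many elements one level down in its derivation. Closing a countable set under `j` and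
under chosen Skolem witnesses for all terms, points and finite environments over it therefore
yields a countable set `C` on which restriction commutes with interpretation: on environments
into `C`, the restricted model computes `⟦M⟧ρ ∩ C`. Starting from an infinite countable set
together with a finite counterexample to every inequation failing in `G`, the restriction to
`C` is a countable graph model with the same order theory. -/

theorem Term.code_injective : Function.Injective Term.code := by
  intro M₁ M₂ h
  induction M₁ generalizing M₂ with
  | var n => cases M₂ <;> simp only [code, var.injEq] at h ⊢ <;> omega
  | app M N ihM ihN =>
      cases M₂ with
      | app M' N' =>
          have h' : Nat.pair M.code N.code = Nat.pair M'.code N'.code := by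
            simp only [code] at h; omega
          obtain ⟨h₁, h₂⟩ := Nat.pair_eq_pair.1 h'
          exact congrArg₂ app (ihM h₁) (ihN h₂)
      | _ => simp only [code] at h; omega
  | lam M ih =>
      cases M₂ <;> simp only [code, lam.injEq] at h ⊢ <;> first | omega | exact ih (by omega)

instance : Countable Term := Term.code_injective.countable

section Interp

variable {α : Type u}

theorem envCons_mono (a : Set α) : Monotone (envCons a) := by
  rintro ρ ρ' h (_ | n)
  exacts [subset_rfl, h n]

theorem interp_mono (P : PrePair α) (M : Term) : Monotone (interp P M) := by
  induction M with
  | var n => exact fun ρ ρ' h => h n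
  | app M N ihM ihN =>
      rintro ρ ρ' h y ⟨a, ha, haN, z, hj, hz⟩
      exact ⟨a, ha, haN.trans (ihN h), z, hj, ihM h hz⟩
  | lam M ih =>
      rintro ρ ρ' h y ⟨a, x, ha, hj, hx⟩
      exact ⟨a, x, ha, hj, ih (envCons_mono a h) hx⟩

theorem interp_subset_of_subpair {P Q : PrePair α} (hPQ : P.Subpair Q) (M : Term)
    (ρ : ℕ → Set α) : interp P M ρ ⊆ interp Q M ρ := by
  induction M generalizing ρ with
  | var n => exact subset_rfl
  | app M N ihM ihN =>
      rintro y ⟨a, ha, haN, z, hj, hz⟩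
      exact ⟨a, ha, haN.trans (ihN ρ), z, hPQ.2 _ _ hj, ihM ρ hz⟩
  | lam M ih =>
      rintro y ⟨a, x, ha, hj, hx⟩
      exact ⟨a, x, ha, hPQ.2 _ _ hj, ih _ hx⟩

theorem interp_subset_carrier {P : PrePair α} (hP : P.Valid) {ρ : ℕ → Set α}
    (hρ : ∀ n, ρ n ⊆ P.carrier) (M : Term) : interp P M ρ ⊆ P.carrier := by
  cases M with
  | var n => exact hρ n
  | app M N =>
      rintro y ⟨a, -, -, z, hj, -⟩
      exact (hP.2.1 a y z hj).2.2.1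
  | lam M =>
      rintro y ⟨a, x, -, hj, -⟩
      exact (hP.2.1 a x y hj).2.2.2

/-- The environment with graph `F`: finite environments are those with a finite graph. -/
def envOf (F : Set (ℕ × α)) (n : ℕ) : Set α := {x | (n, x) ∈ F}

theorem envOf_mono : Monotone (envOf : Set (ℕ × α) → ℕ → Set α) :=
  fun _ _ h _ _ hx => h hx

theorem envOf_le_iff {F : Set (ℕ × α)} {ρ : ℕ → Set α} :
    envOf F ≤ ρ ↔ ∀ p ∈ F, p.2 ∈ ρ p.1 :=
  ⟨fun h p hp => h p.1 hp, fun h _ _ hx => h _ hx⟩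

theorem exists_finite_env_of_mem_interp (P : PrePair α) {M : Term} {ρ : ℕ → Set α} {y : α}
    (hy : y ∈ interp P M ρ) :
    ∃ F : Set (ℕ × α), F.Finite ∧ envOf F ≤ ρ ∧ y ∈ interp P M (envOf F) := by
  induction M generalizing ρ y with
  | var n =>
      refine ⟨{(n, y)}, Set.finite_singleton _, envOf_le_iff.2 fun p hp => ?_, Set.mem_singleton _⟩
      rw [Set.mem_singleton_iff.1 hp]
      exact hy
  | app M N ihM ihN =>
      obtain ⟨a, ha, haN, z, hj, hz⟩ := hy
      obtain ⟨Fz, hFz, hFzρ, hzF⟩ := ihM hz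
      have hwit : ∀ x ∈ a, ∃ F : Set (ℕ × α), F.Finite ∧ envOf F ≤ ρ ∧ x ∈ interp P N (envOf F) :=
        fun x hx => ihN (haN hx)
      choose! Fa hFa hFaρ hxFa using hwit
      refine ⟨Fz ∪ ⋃ x ∈ a, Fa x, hFz.union (ha.biUnion hFa), envOf_le_iff.2 ?_,
        a, ha, fun x hx => ?_, z, hj, interp_mono P M (envOf_mono Set.subset_union_left) hzF⟩
      · rintro p (hp | hp)
        · exact envOf_le_iff.1 hFzρ p hp
        · obtain ⟨x, hx, hp⟩ := Set.mem_iUnion₂.1 hp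
          exact envOf_le_iff.1 (hFaρ x hx) p hp
      · refine interp_mono P N (envOf_mono ?_) (hxFa x hx)
        exact (Set.subset_biUnion_of_mem hx).trans Set.subset_union_right
  | lam M ih =>
      obtain ⟨a, x, ha, hj, hx⟩ := hy
      obtain ⟨F, hF, hFρ, hxF⟩ := ih hx
      -- the graph of the tail of `envOf F`
      refine ⟨(fun p => (p.1 + 1, p.2)) ⁻¹' F, hF.preimage ?_, fun n => hFρ (n + 1),
        a, x, ha, hj, interp_mono P M ?_ hxF⟩
      · exact fun p _ q _ h => by simpa [Prod.ext_iff] using h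
      · rintro (_ | n)
        exacts [hFρ 0, subset_rfl]

end Interp

section FinitaryClosure

variable {α : Type u} (R : Set α → Set α) (C₀ : Set α)

def closureStage : ℕ → Set α
  | 0 => C₀
  | k + 1 => closureStage k ∪ ⋃ s ∈ {s : Set α | s.Finite ∧ s ⊆ closureStage k}, R s

def finitaryClosure : Set α := ⋃ k, closureStage R C₀ k

theorem closureStage_mono : Monotone (closureStage R C₀) :=
  monotone_nat_of_le_succ fun _ => Set.subset_union_left

theorem subset_finitaryClosure : C₀ ⊆ finitaryClosure R C₀ :=
  Set.subset_iUnion (closureStage R C₀) 0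

variable {R C₀}

theorem apply_subset_finitaryClosure {s : Set α} (hs : s.Finite)
    (hsC : s ⊆ finitaryClosure R C₀) : R s ⊆ finitaryClosure R C₀ := by
  obtain ⟨k, hk⟩ := (closureStage_mono R C₀).directed_le.exists_mem_subset_of_finset_subset_biUnion
    (s := hs.toFinset) (by simpa [finitaryClosure] using hsC)
  rw [hs.coe_toFinset] at hk
  have hR : R s ⊆ closureStage R C₀ (k + 1) := fun y hy =>
    Or.inr (Set.mem_biUnion (show s ∈ {t | t.Finite ∧ t ⊆ closureStage R C₀ k} from ⟨hs, hk⟩) hy)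
  exact hR.trans (Set.subset_iUnion _ (k + 1))

theorem finitaryClosure_subset {D : Set α} (hC₀ : C₀ ⊆ D) (hR : ∀ s ⊆ D, R s ⊆ D) :
    finitaryClosure R C₀ ⊆ D := by
  refine Set.iUnion_subset fun k => ?_
  induction k with
  | zero => exact hC₀
  | succ k ih => exact Set.union_subset ih (Set.iUnion₂_subset fun s hs => hR s (hs.2.trans ih))

theorem countable_finitaryClosure (hC₀ : C₀.Countable) (hR : ∀ s, s.Finite → (R s).Countable) :
    (finitaryClosure R C₀).Countable := by
  refine Set.countable_iUnion fun k => ?_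
  induction k with
  | zero => exact hC₀
  | succ k ih =>
      exact ih.union ((Set.countable_ofPred_finite_subset ih).biUnion fun s hs => hR s hs.1)

end FinitaryClosure

namespace PrePair

variable {α : Type u}

open Classical in
noncomputable def restrict (G : PrePair α) (C : Set α) : PrePair α :=
  ⟨C, fun p => if p.1 ⊆ C ∧ p.2 ∈ C then G.j p else none⟩

theorem restrict_j_eq_some {G : PrePair α} {C : Set α} {p : Set α × α} {y : α} :
    (G.restrict C).j p = some y ↔ p.1 ⊆ C ∧ p.2 ∈ C ∧ G.j p = some y := by
  simp only [restrict]
  split_ifs with h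
  · simp [h]
  · simpa using fun h₁ h₂ => absurd ⟨h₁, h₂⟩ h

theorem restrict_subpair (G : PrePair α) {C : Set α} (hCG : C ⊆ G.carrier) :
    (G.restrict C).Subpair G :=
  ⟨hCG, fun _ _ h => (restrict_j_eq_some.1 h).2.2⟩

def JClosed (G : PrePair α) (C : Set α) : Prop :=
  ∀ a x y, a.Finite → a ⊆ C → x ∈ C → G.j (a, x) = some y → y ∈ C

theorem isGraphModel_restrict {G : PrePair α} (hG : G.IsGraphModel) {C : Set α}
    (hCG : C ⊆ G.carrier) (hC : G.JClosed C) (hCinf : C.Infinite) :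
    (G.restrict C).IsGraphModel := by
  obtain ⟨⟨-, hdom, hinj⟩, htot, -⟩ := hG
  refine ⟨⟨hCinf.nonempty, fun a x y hj => ?_, fun p q y hp hq => ?_⟩,
    fun a x ha haC hx => ?_, hCinf⟩
  · obtain ⟨haC, hx, hj⟩ := restrict_j_eq_some.1 hj
    have ha := (hdom a x y hj).1
    exact ⟨ha, haC, hx, hC a x y ha haC hx hj⟩
  · exact hinj p q y (restrict_j_eq_some.1 hp).2.2 (restrict_j_eq_some.1 hq).2.2
  · obtain ⟨y, hy⟩ := htot a x ha (haC.trans hCG) (hCG hx)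
    exact ⟨y, restrict_j_eq_some.2 ⟨haC, hx, hy⟩⟩

theorem interp_restrict_subset {G : PrePair α} {C : Set α} (hC : G.JClosed C)
    {ρ : ℕ → Set α} (hρ : ∀ n, ρ n ⊆ C) (M : Term) : interp (G.restrict C) M ρ ⊆ C := by
  cases M with
  | var n => exact hρ n
  | app M N =>
      rintro y ⟨a, -, -, z, hj, -⟩
      exact (restrict_j_eq_some.1 hj).2.1
  | lam M =>
      rintro y ⟨a, x, ha, hj, -⟩
      obtain ⟨haC, hx, hj⟩ := restrict_j_eq_some.1 hj
      exact hC a x y ha haC hx hj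

def IsElementary (G : PrePair α) (C : Set α) : Prop :=
  ∀ (M : Term) (ρ : ℕ → Set α), (∀ n, ρ n ⊆ C) → interp (G.restrict C) M ρ = interp G M ρ ∩ C

theorem ThLe_subset_ThLe_restrict {G : PrePair α} {C : Set α} (hCG : C ⊆ G.carrier)
    (hC : G.IsElementary C) : ThLe G ⊆ ThLe (G.restrict C) := by
  intro p hp ρ hρ
  rw [hC _ ρ hρ, hC _ ρ hρ]
  exact Set.inter_subset_inter_left C (hp ρ fun n => (hρ n).trans hCG)

theorem exists_finite_refutation {G : PrePair α} (hG : G.Valid) {p : Term × Term}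
    (hp : p ∉ ThLe G) :
    ∃ W : Set α, W.Finite ∧ W ⊆ G.carrier ∧
      ∀ C, W ⊆ C → G.IsElementary C → p ∉ ThLe (G.restrict C) := by
  simp only [ThLe, Set.mem_ofPred_eq, not_forall, Set.not_subset] at hp
  obtain ⟨ρ, hρ, y, hy₁, hy₂⟩ := hp
  obtain ⟨F, hF, hFρ, hyF⟩ := exists_finite_env_of_mem_interp G hy₁
  refine ⟨insert y (Prod.snd '' F), (hF.image _).insert y,
    Set.insert_subset (interp_subset_carrier hG hρ _ hy₁) ?_, fun C hWC hC hp => hy₂ ?_⟩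
  · rintro _ ⟨q, hq, rfl⟩
    exact hρ q.1 (envOf_le_iff.1 hFρ q hq)
  · have hFC : ∀ n, envOf F n ⊆ C := fun n x hx => hWC (Or.inr ⟨(n, x), hx, rfl⟩)
    have hy := hp (envOf F) hFC (by rw [hC _ _ hFC]; exact ⟨hyF, hWC (Or.inl rfl)⟩)
    rw [hC _ _ hFC] at hy
    exact interp_mono G p.2 hFρ hy.1

open Classical in
/-- Skolem witnesses for `y ∈ ⟦M⟧ρ`: the set `a` (and, for `λ`, the point `x`) of a chosen
derivation; the remaining witness `j (a, y)` of an application comes from closure under `j`. -/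
noncomputable def skolem (G : PrePair α) : Term → (ℕ → Set α) → α → Set α
  | var _, _, _ => ∅
  | app M N, ρ, y => if h : y ∈ interp G (app M N) ρ then Exists.choose h else ∅
  | lam M, ρ, y =>
      if h : y ∈ interp G (lam M) ρ then insert (Exists.choose (Exists.choose_spec h)) h.choose
      else ∅

variable {G : PrePair α} {M N : Term} {ρ : ℕ → Set α} {y : α}

theorem exists_subset_skolem_of_mem_interp_app (hy : y ∈ interp G (app M N) ρ) :
    ∃ a ⊆ G.skolem (app M N) ρ y, a.Finite ∧ a ⊆ interp G N ρ ∧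
      ∃ z, G.j (a, y) = some z ∧ z ∈ interp G M ρ := by
  rw [skolem, dif_pos hy]
  exact ⟨_, subset_rfl, Exists.choose_spec hy⟩

theorem exists_subset_skolem_of_mem_interp_lam (hy : y ∈ interp G (lam M) ρ) :
    ∃ a ⊆ G.skolem (lam M) ρ y, ∃ x ∈ G.skolem (lam M) ρ y,
      a.Finite ∧ G.j (a, x) = some y ∧ x ∈ interp G M (envCons a ρ) := by
  rw [skolem, dif_pos hy]
  exact ⟨_, Set.subset_insert _ _, _, Set.mem_insert _ _,
    Exists.choose_spec (Exists.choose_spec hy)⟩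

theorem skolem_finite (G : PrePair α) (M : Term) (ρ : ℕ → Set α) (y : α) :
    (G.skolem M ρ y).Finite := by
  cases M with
  | var n => exact Set.finite_empty
  | app M N =>
      rw [skolem]
      split_ifs with hy
      exacts [(Exists.choose_spec hy).1, Set.finite_empty]
  | lam M =>
      rw [skolem]
      split_ifs with hy
      exacts [(Exists.choose_spec (Exists.choose_spec hy)).1.insert _, Set.finite_empty]

theorem skolem_subset_carrier (hG : G.Valid) (M : Term) (ρ : ℕ → Set α) (y : α) :
    G.skolem M ρ y ⊆ G.carrier := by
  cases M with
  | var n => exact Set.empty_subset _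
  | app M N =>
      rw [skolem]
      split_ifs with hy
      · obtain ⟨-, -, z, hj, -⟩ := Exists.choose_spec hy
        exact (hG.2.1 _ _ _ hj).2.1
      · exact Set.empty_subset _
  | lam M =>
      rw [skolem]
      split_ifs with hy
      · obtain ⟨-, hj, -⟩ := Exists.choose_spec (Exists.choose_spec hy)
        obtain ⟨-, ha, hx, -⟩ := hG.2.1 _ _ _ hj
        exact Set.insert_subset hx ha
      · exact Set.empty_subset _

noncomputable def skolemStep (G : PrePair α) (s : Set α) : Set α :=
  (⋃ p ∈ 𝒫 s ×ˢ s, {y | G.j p = some y}) ∪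
    ⋃ (M : Term) (F ∈ {F : Set (ℕ × α) | F.Finite ∧ F ⊆ Set.univ ×ˢ s}) (y ∈ s),
      G.skolem M (envOf F) y

theorem countable_skolemStep (G : PrePair α) {s : Set α} (hs : s.Finite) :
    (G.skolemStep s).Countable := by
  refine Set.Countable.union ?_ (Set.countable_iUnion fun M => ?_)
  · refine (hs.powerset.prod hs).countable.biUnion fun p _ => ?_
    exact Set.Subsingleton.countable fun y hy z hz => Option.some_injective _ (hy.symm.trans hz)
  · refine (Set.countable_ofPred_finite_subset (Set.countable_univ.prod hs.countable)).biUnion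
      fun F _ => hs.countable.biUnion fun y _ => (G.skolem_finite M _ y).countable

theorem skolemStep_subset_carrier (hG : G.Valid) (s : Set α) :
    G.skolemStep s ⊆ G.carrier := by
  refine Set.union_subset (Set.iUnion₂_subset fun p _ y hy => (hG.2.1 _ _ _ hy).2.2.2) ?_
  exact Set.iUnion_subset fun M => Set.iUnion₂_subset fun F _ =>
    Set.iUnion₂_subset fun y _ => skolem_subset_carrier hG M _ y

noncomputable def skolemHull (G : PrePair α) (C₀ : Set α) : Set α :=
  finitaryClosure G.skolemStep C₀

variable {C₀ : Set α}

theorem countable_skolemHull (G : PrePair α) (hC₀ : C₀.Countable) :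
    (G.skolemHull C₀).Countable :=
  countable_finitaryClosure hC₀ fun _ => G.countable_skolemStep

theorem skolemHull_subset_carrier (hG : G.Valid) (hC₀ : C₀ ⊆ G.carrier) :
    G.skolemHull C₀ ⊆ G.carrier :=
  finitaryClosure_subset hC₀ fun s _ => skolemStep_subset_carrier hG s

theorem jClosed_skolemHull (G : PrePair α) (C₀ : Set α) : G.JClosed (G.skolemHull C₀) := by
  intro a x y ha haC hx hj
  refine apply_subset_finitaryClosure (ha.insert x) (Set.insert_subset hx haC) (Or.inl ?_)
  exact Set.mem_biUnion (show (a, x) ∈ 𝒫 insert x a ×ˢ insert x a from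
    ⟨Set.subset_insert x a, Set.mem_insert x a⟩) hj

theorem skolem_subset_skolemHull (G : PrePair α) (M : Term) {F : Set (ℕ × α)} (hF : F.Finite)
    (hFC : ∀ n, envOf F n ⊆ G.skolemHull C₀) (hy : y ∈ G.skolemHull C₀) :
    G.skolem M (envOf F) y ⊆ G.skolemHull C₀ := by
  set s := insert y (Prod.snd '' F)
  have hFs : F ⊆ Set.univ ×ˢ s := fun q hq => ⟨trivial, Or.inr ⟨q, hq, rfl⟩⟩
  have hsC : s ⊆ G.skolemHull C₀ :=
    Set.insert_subset hy (by rintro _ ⟨q, hq, rfl⟩; exact hFC q.1 hq)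
  refine fun x hx => apply_subset_finitaryClosure ((hF.image _).insert y) hsC (Or.inr ?_)
  exact Set.mem_iUnion.2 ⟨M, Set.mem_biUnion
    (show F ∈ {F : Set (ℕ × α) | F.Finite ∧ F ⊆ Set.univ ×ˢ s} from ⟨hF, hFs⟩)
    (Set.mem_biUnion (Set.mem_insert y _) hx)⟩

theorem mem_interp_restrict_skolemHull {M : Term} {ρ : ℕ → Set α}
    (hρ : ∀ n, ρ n ⊆ G.skolemHull C₀) (hyC : y ∈ G.skolemHull C₀) (hy : y ∈ interp G M ρ) :
    y ∈ interp (G.restrict (G.skolemHull C₀)) M ρ := by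
  induction M generalizing ρ y with
  | var n => exact hy
  | app M N ihM ihN =>
      obtain ⟨F, hF, hFρ, hyF⟩ := exists_finite_env_of_mem_interp G hy
      have hFC : ∀ n, envOf F n ⊆ G.skolemHull C₀ := fun n => (hFρ n).trans (hρ n)
      obtain ⟨a, haS, ha, haN, z, hj, hz⟩ := exists_subset_skolem_of_mem_interp_app hyF
      have haC : a ⊆ G.skolemHull C₀ := haS.trans (G.skolem_subset_skolemHull _ hF hFC hyC)
      have hzC : z ∈ G.skolemHull C₀ := G.jClosed_skolemHull C₀ a y z ha haC hyC hj
      exact interp_mono _ _ hFρ ⟨a, ha, fun x hx => ihN hFC (haC hx) (haN hx),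
        z, restrict_j_eq_some.2 ⟨haC, hyC, hj⟩, ihM hFC hzC hz⟩
  | lam M ih =>
      obtain ⟨F, hF, hFρ, hyF⟩ := exists_finite_env_of_mem_interp G hy
      have hFC : ∀ n, envOf F n ⊆ G.skolemHull C₀ := fun n => (hFρ n).trans (hρ n)
      obtain ⟨a, haS, x, hxS, ha, hj, hx⟩ := exists_subset_skolem_of_mem_interp_lam hyF
      have hS := G.skolem_subset_skolemHull (lam M) hF hFC hyC
      have henv : ∀ n, envCons a (envOf F) n ⊆ G.skolemHull C₀ := by
        rintro (_ | n)
        exacts [haS.trans hS, hFC n]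
      exact interp_mono _ _ hFρ
        ⟨a, x, ha, restrict_j_eq_some.2 ⟨haS.trans hS, hS hxS, hj⟩, ih henv (hS hxS) hx⟩

theorem isElementary_skolemHull (hG : G.Valid) (hC₀ : C₀ ⊆ G.carrier) :
    G.IsElementary (G.skolemHull C₀) := by
  intro M ρ hρ
  have hsub := G.restrict_subpair (skolemHull_subset_carrier hG hC₀)
  refine subset_antisymm (Set.subset_inter (interp_subset_of_subpair hsub M ρ)
    (interp_restrict_subset (G.jClosed_skolemHull C₀) hρ M)) ?_
  rintro y ⟨hy, hyC⟩
  exact mem_interp_restrict_skolemHull hρ hyC hy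

end PrePair

theorem Th_eq_setOf_ThLe {α : Type u} (P : PrePair α) :
    Th P = {p | p ∈ ThLe P ∧ p.swap ∈ ThLe P} := by
  ext p
  exact ⟨fun h => ⟨fun ρ hρ => (h ρ hρ).le, fun ρ hρ => (h ρ hρ).ge⟩,
    fun h ρ hρ => subset_antisymm (h.1 ρ hρ) (h.2 ρ hρ)⟩

/-- **Löwenheim–Skolem for graph models.** Every graph model has
the same order (hence equational) theory as a graph model whose web is a
countable total subpair of its web. -/
theorem lowenheim_skolem_graph {α : Type u} (G : PrePair α)
    (hG : PrePair.IsGraphModel G) :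
    ∃ G' : PrePair α, PrePair.Subpair G' G ∧ G'.carrier.Countable ∧
      PrePair.IsGraphModel G' ∧ ThLe G' = ThLe G ∧ Th G' = Th G := by
  obtain ⟨D, hDG, hDc, hDinf⟩ := hG.2.2.exists_subset_countable_infinite
  choose W hWfin hWG hW using
    fun p : {p // p ∉ ThLe G} => PrePair.exists_finite_refutation hG.1 p.2
  set C₀ := D ∪ ⋃ p, W p
  set C := G.skolemHull C₀
  have hC₀G : C₀ ⊆ G.carrier := Set.union_subset hDG (Set.iUnion_subset hWG)
  have hC₀C : C₀ ⊆ C := subset_finitaryClosure _ _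
  have hCG : C ⊆ G.carrier := PrePair.skolemHull_subset_carrier hG.1 hC₀G
  have hCel : G.IsElementary C := PrePair.isElementary_skolemHull hG.1 hC₀G
  have hThLe : ThLe (G.restrict C) = ThLe G := by
    refine subset_antisymm (fun p hp => ?_) (PrePair.ThLe_subset_ThLe_restrict hCG hCel)
    by_contra hpG
    exact hW ⟨p, hpG⟩ C ((Set.subset_iUnion W _).trans (Set.subset_union_right.trans hC₀C)) hCel hp
  refine ⟨G.restrict C, G.restrict_subpair hCG,
    G.countable_skolemHull (hDc.union (Set.countable_iUnion fun p => (hWfin p).countable)),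
    PrePair.isGraphModel_restrict hG hCG (G.jClosed_skolemHull C₀)
      (hDinf.mono (Set.subset_union_left.trans hC₀C)), hThLe, ?_⟩
  rw [Th_eq_setOf_ThLe, Th_eq_setOf_ThLe, hThLe]
end

section
/- For every partial pair A, the interpretation of Ω = (λx.xx)(λx.xx) in the graph model G_Ā freely generated by A satisfies ⟦Ω⟧^{G_Ā} ⊆ A (all its elements have rank 0, i.e., lie in the original carrier set A). -/
universe u v

open Term

/-!
If `x ∈ ⟦Ω⟧`, some finite `a ⊆ ⟦δ⟧` has `j(a, x) ∈ ⟦δ⟧`. Unfolding `⟦δ⟧` at `j(a, x)` and using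
the injectivity of `j`, some finite `c ⊆ a` has `j(c, x) ∈ a`: the same situation, with `j(c, x)` in
place of `j(a, x)`. When `x ∉ A`, `j̄(a, x)` is the formal pair `(a, x)`, so `j̄(c, x) ∈ a` is
structurally smaller than `j̄(a, x)`, and this descent cannot go on forever.
-/

section Omega

variable {α : Type u} {P : PrePair α} {ρ : ℕ → Set α} {x : α}

theorem mem_interp_delta {w : α} :
    w ∈ interp P delta ρ ↔ ∃ (b : Set α) (β : α), b.Finite ∧ P.j (b, β) = some w ∧
      ∃ c : Set α, c.Finite ∧ c ⊆ b ∧ ∃ w', P.j (c, β) = some w' ∧ w' ∈ b :=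
  Iff.rfl

theorem mem_interp_Omega :
    x ∈ interp P Omega ρ ↔ ∃ a : Set α, a.Finite ∧ a ⊆ interp P delta ρ ∧
      ∃ z, P.j (a, x) = some z ∧ z ∈ interp P delta ρ :=
  Iff.rfl

theorem notMem_interp_Omega {r : α → α → Prop} (hr : WellFounded r)
    (hinj : ∀ p c w, P.j p = some w → P.j (c, x) = some w → p = (c, x))
    (hdesc : ∀ c w, P.j (c, x) = some w → ∀ w' ∈ c, r w' w) :
    x ∉ interp P Omega ρ := by
  have no_chain : ∀ w, ¬ ∃ c ⊆ interp P delta ρ, P.j (c, x) = some w ∧ w ∈ interp P delta ρ := by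
    intro w
    induction w using hr.induction with
    | _ w ih =>
      rintro ⟨c, hcδ, hw, hwδ⟩
      obtain ⟨b, β, -, hb, c', -, hc'b, w', hw', hw'b⟩ := mem_interp_delta.mp hwδ
      obtain ⟨rfl, rfl⟩ := Prod.ext_iff.mp (hinj _ _ _ hb hw)
      exact ih w' (hdesc b w hw w' hw'b) ⟨c', hc'b.trans hcδ, hw', hcδ hw'b⟩
  intro hx
  obtain ⟨a, -, haδ, z, hz, hzδ⟩ := mem_interp_Omega.mp hx
  exact no_chain z ⟨a, haδ, hz, hzδ⟩

end Omega

namespace FC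

variable {α : Type u} {P : PrePair α}

theorem sizeOf_lt_sizeOf_node {l : List (FC α)} {x m : FC α} (h : m ∈ l) :
    sizeOf m < sizeOf (node l x) := by
  have := List.sizeOf_lt_of_mem h
  simp only [node.sizeOf_spec]
  omega

theorem mem_listOf {c : Set (FC α)} (hc : c.Finite) {x : FC α} : x ∈ listOf c ↔ x ∈ c := by
  simp [listOf, hc]

theorem listOf_injOn : Set.InjOn (listOf (α := α)) {c | c.Finite} := fun b hb c hc h =>
  Set.ext fun x => by rw [← mem_listOf hb, h, mem_listOf hc]

theorem mem_carrier_of_base_mem_compCarrier {x₀ : α} (h : base x₀ ∈ compCarrier P) :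
    x₀ ∈ P.carrier := by
  obtain ⟨n, hn⟩ := Set.mem_iUnion.mp h
  cases n <;> simpa [stage, baseSet] using hn

theorem jbar_eq_node_of_notMem {c : Set (FC α)} {x w : FC α} (hx : x ∉ base '' P.carrier)
    (h : jbar P (c, x) = some w) : c.Finite ∧ w = node (listOf c) x := by
  unfold jbar at h
  split_ifs at h with hdom hold
  · obtain ⟨-, x₀, -, -, rfl, -, -⟩ := hold.choose_spec
    exact absurd ⟨x₀, mem_carrier_of_base_mem_compCarrier hdom.2.2, rfl⟩ hx
  · exact ⟨hdom.1, (Option.some_inj.mp h).symm⟩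

theorem eq_of_jbar_eq_some_node {p : Set (FC α) × FC α} {l : List (FC α)} {x : FC α}
    (h : jbar P p = some (node l x)) : p.1.Finite ∧ listOf p.1 = l ∧ p.2 = x := by
  unfold jbar at h
  split_ifs at h with hdom hold
  · obtain ⟨_, _, _, -, -, -, hy⟩ := hold.choose_spec
    rw [Option.some_inj.mp h] at hy
    cases hy
  · obtain ⟨hl, hx⟩ := node.inj (Option.some_inj.mp h)
    exact ⟨hdom.1, hl, hx⟩

theorem jbar_inj_of_notMem {p : Set (FC α) × FC α} {c : Set (FC α)} {x w : FC α}
    (hx : x ∉ base '' P.carrier) (hp : jbar P p = some w) (hc : jbar P (c, x) = some w) :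
    p = (c, x) := by
  obtain ⟨hcfin, rfl⟩ := jbar_eq_node_of_notMem hx hc
  obtain ⟨hpfin, hl, hpx⟩ := eq_of_jbar_eq_some_node hp
  exact Prod.ext (listOf_injOn hpfin hcfin hl) hpx

theorem sizeOf_lt_of_jbar {c : Set (FC α)} {x w w' : FC α} (hx : x ∉ base '' P.carrier)
    (hc : jbar P (c, x) = some w) (hw' : w' ∈ c) : sizeOf w' < sizeOf w := by
  obtain ⟨hcfin, rfl⟩ := jbar_eq_node_of_notMem hx hc
  exact sizeOf_lt_sizeOf_node ((mem_listOf hcfin).mpr hw')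

end FC

theorem omega_interp_in_base_general {α : Type u} (A : PrePair α) :
    interpC (completion A) Term.Omega ⊆ FC.base '' A.carrier := by
  intro x hx
  by_contra hxA
  exact notMem_interp_Omega (measure sizeOf).wf (fun _ _ _ => FC.jbar_inj_of_notMem hxA)
    (fun _ _ hc _ => FC.sizeOf_lt_of_jbar hxA hc) hx

/-- In the graph model freely generated by a partial pair
`A`, the interpretation of `Ω` is contained in (the copy of) `A`. -/
theorem omega_interp_in_base {α : Type u} (A : PrePair α) (hA : A.Valid) :
    interpC (completion A) Term.Omega ⊆ FC.base '' A.carrier :=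
  omega_interp_in_base_general A
end

section
/- For every graph model G and every closed λ-term N, if ⟦N⟧^G ⊆ ⟦I⟧^G, where I = λx.x, then either N =β I or N is unsolvable. -/
universe u v

open Term

/-! If `N` is solvable, it is β-equal to a head normal form `H = λx₁…xₙ. y M₁ ⋯ Mₖ`, and
soundness of β-conversion gives `⟦H⟧ρ ⊆ ⟦I⟧` for every environment `ρ`. The elements of
`⟦I⟧` are exactly the `i(a, x)` with `x ∈ a`. Letting `y` denote the single element
`i(∅, … i(∅, u))` (`k` times) puts `u` into `⟦y M₁ ⋯ Mₖ⟧`, hence an `n`-fold pair built from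
`u` into `⟦H⟧`; choosing `u` and the values of `x₁, …, xₙ` suitably, such an element fails to
lie in `⟦I⟧` unless `n = 1`, `y = x₁` and `k = 0`, i.e. `H = I`. -/

open Function

namespace PrePair

variable {α : Type u} {G : PrePair α}

/-- `x` is a junk default, taken only where `j (a, x)` is undefined. -/
def pair (G : PrePair α) (a : Set α) (x : α) : α := (G.j (a, x)).getD x

theorem j_eq_some_pair (ht : G.Total) {a : Set α} {x : α} (ha : a.Finite)
    (haC : a ⊆ G.carrier) (hx : x ∈ G.carrier) : G.j (a, x) = some (G.pair a x) := by
  obtain ⟨y, hy⟩ := ht a x ha haC hx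
  simp [pair, hy]

theorem pair_mem (hv : G.Valid) (ht : G.Total) {a : Set α} {x : α} (ha : a.Finite)
    (haC : a ⊆ G.carrier) (hx : x ∈ G.carrier) : G.pair a x ∈ G.carrier :=
  (hv.2.1 _ _ _ (j_eq_some_pair ht ha haC hx)).2.2.2

theorem mapsTo_pair_empty (hv : G.Valid) (ht : G.Total) :
    Set.MapsTo (G.pair ∅) G.carrier G.carrier :=
  fun _ hx => pair_mem hv ht Set.finite_empty (Set.empty_subset _) hx

theorem Valid.eq_of_j_eq_some (hv : G.Valid) {a b : Set α} {x y z : α}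
    (h₁ : G.j (a, x) = some z) (h₂ : G.j (b, y) = some z) : a = b ∧ x = y :=
  Prod.ext_iff.1 (hv.2.2 _ _ _ h₁ h₂)

theorem pair_inj (hv : G.Valid) (ht : G.Total) {a b : Set α} {x y : α}
    (ha : a.Finite) (haC : a ⊆ G.carrier) (hx : x ∈ G.carrier)
    (hb : b.Finite) (hbC : b ⊆ G.carrier) (hy : y ∈ G.carrier)
    (h : G.pair a x = G.pair b y) : a = b ∧ x = y :=
  hv.eq_of_j_eq_some (j_eq_some_pair ht ha haC hx) (h ▸ j_eq_some_pair ht hb hbC hy)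

def FiniteEnv (G : PrePair α) (E : ℕ → Set α) : Prop :=
  ∀ i, (E i).Finite ∧ E i ⊆ G.carrier

theorem finiteEnv_empty : G.FiniteEnv fun _ => ∅ :=
  fun _ => ⟨Set.finite_empty, Set.empty_subset _⟩

theorem FiniteEnv.update_singleton {E : ℕ → Set α} (hE : G.FiniteEnv E) (i : ℕ) {x : α}
    (hx : x ∈ G.carrier) : G.FiniteEnv (update E i {x}) := by
  intro n
  rcases eq_or_ne n i with rfl | hn
  · simpa using hx
  · simpa [hn] using hE n

end PrePair

section Environments

variable {β : Type u}

def envInsert (k : ℕ) (s : Set β) (ρ : ℕ → Set β) : ℕ → Set β :=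
  fun n => if n < k then ρ n else if n = k then s else ρ (n - 1)

def envDelete (d : ℕ) (ρ : ℕ → Set β) : ℕ → Set β :=
  fun n => if n < d then ρ n else ρ (n + 1)

theorem envInsert_zero (s : Set β) (ρ : ℕ → Set β) : envInsert 0 s ρ = envCons s ρ := by
  funext n
  cases n <;> simp [envInsert, envCons]

theorem envCons_envInsert (a s : Set β) (k : ℕ) (ρ : ℕ → Set β) :
    envCons a (envInsert k s ρ) = envInsert (k + 1) s (envCons a ρ) := by
  funext n
  rcases n with _ | _ | n
  · simp [envInsert, envCons]
  · cases k <;> simp [envInsert, envCons]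
  · simp only [envInsert, envCons, Nat.add_lt_add_iff_right, Nat.add_right_cancel_iff]
    split_ifs <;> rfl

theorem envDelete_zero_envCons (a : Set β) (ρ : ℕ → Set β) : envDelete 0 (envCons a ρ) = ρ :=
  rfl

theorem envCons_envDelete (a : Set β) (d : ℕ) (ρ : ℕ → Set β) :
    envCons a (envDelete d ρ) = envDelete (d + 1) (envCons a ρ) := by
  funext n
  cases n <;> simp [envDelete, envCons]

theorem envCons_update (a s : Set β) (n : ℕ) (ρ : ℕ → Set β) :
    envCons a (update ρ n s) = update (envCons a ρ) (n + 1) s := by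
  funext m
  cases m <;> simp [envCons, update_apply]

theorem update_envCons_zero (a s : Set β) (ρ : ℕ → Set β) :
    update (envCons s ρ) 0 a = envCons a ρ := by
  funext m
  cases m <;> simp [envCons]

theorem envCons_mono_s13 {a b : Set β} {ρ ρ' : ℕ → Set β} (hab : a ⊆ b) (hρ : ρ ≤ ρ') :
    envCons a ρ ≤ envCons b ρ'
  | 0 => hab
  | n + 1 => hρ n

theorem envCons_subset {a C : Set β} {ρ : ℕ → Set β} (ha : a ⊆ C) (hρ : ∀ n, ρ n ⊆ C) :
    ∀ n, envCons a ρ n ⊆ C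
  | 0 => ha
  | n + 1 => hρ n

end Environments

section Interpretation

variable {α : Type u} {G : PrePair α}

theorem interp_subset_carrier_s13 (hv : G.Valid) :
    ∀ (M : Term) {ρ : ℕ → Set α}, (∀ n, ρ n ⊆ G.carrier) → interp G M ρ ⊆ G.carrier
  | .var n, _, hρ => hρ n
  | .app _ _, _, _ => fun _ ⟨_, _, _, _, hj, _⟩ => (hv.2.1 _ _ _ hj).2.2.1
  | .lam _, _, _ => fun _ ⟨_, _, _, hj, _⟩ => (hv.2.1 _ _ _ hj).2.2.2

theorem interp_mono_s13 : ∀ M : Term, Monotone (interp G M)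
  | .var n, _, _, h => h n
  | .app M N, _, _, h => fun _ ⟨a, ha, haN, z, hj, hz⟩ =>
      ⟨a, ha, haN.trans (interp_mono_s13 N h), z, hj, interp_mono_s13 M h hz⟩
  | .lam M, _, _, h => fun _ ⟨a, x, ha, hj, hx⟩ =>
      ⟨a, x, ha, hj, interp_mono_s13 M (envCons_mono_s13 subset_rfl h) hx⟩

theorem interp_congr_of_boundedBy : ∀ (M : Term) {d : ℕ} {ρ ρ' : ℕ → Set α},
    M.BoundedBy d → (∀ n < d, ρ n = ρ' n) → interp G M ρ = interp G M ρ'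
  | .var n, _, _, _, hM, h => h n hM
  | .app M N, _, _, _, hM, h => by
      simp only [interp, interp_congr_of_boundedBy M hM.1 h, interp_congr_of_boundedBy N hM.2 h]
  | .lam M, _, ρ, ρ', hM, h => by
      have hbody (a : Set α) : interp G M (envCons a ρ) = interp G M (envCons a ρ') :=
        interp_congr_of_boundedBy M hM fun
          | 0, _ => rfl
          | n + 1, hn => h n (Nat.lt_of_succ_lt_succ hn)
      simp only [interp, hbody]

theorem interp_eq_interpC {N : Term} (hN : N.Closed) (ρ : ℕ → Set α) :
    interp G N ρ = interpC G N :=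
  interp_congr_of_boundedBy N hN fun _ hn => absurd hn (Nat.not_lt_zero _)

/-- Continuity of `interp` in a single variable. -/
theorem exists_finite_mem_interp_update : ∀ (M : Term) {ρ : ℕ → Set α} (n : ℕ) {y : α},
    y ∈ interp G M ρ → ∃ a ⊆ ρ n, a.Finite ∧ y ∈ interp G M (update ρ n a)
  | .var m, ρ, n, y, hy => by
      rcases eq_or_ne m n with rfl | hm
      · exact ⟨{y}, Set.singleton_subset_iff.2 hy, Set.finite_singleton y, by simp [interp]⟩
      · exact ⟨∅, Set.empty_subset _, Set.finite_empty, by simpa [interp, hm] using hy⟩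
  | .app M N, ρ, n, y, ⟨b, hb, hbN, z, hj, hz⟩ => by
      obtain ⟨a₀, ha₀ρ, ha₀, hz'⟩ := exists_finite_mem_interp_update M n hz
      have hN : ∀ w ∈ b, ∃ c ⊆ ρ n, c.Finite ∧ w ∈ interp G N (update ρ n c) :=
        fun w hw => exists_finite_mem_interp_update N n (hbN hw)
      choose c hcρ hc hwc using hN
      set a := a₀ ∪ ⋃ w, ⋃ hw : w ∈ b, c w hw
      have hmono {c'} (hc' : c' ⊆ a) := update_mono (f := ρ) (i := n) hc'
      refine ⟨a, Set.union_subset ha₀ρ (Set.iUnion₂_subset hcρ),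
        ha₀.union (hb.biUnion' hc), b, hb, fun w hw => ?_, z, hj,
        interp_mono_s13 M (hmono Set.subset_union_left) hz'⟩
      exact interp_mono_s13 N (hmono ((Set.subset_iUnion₂ (s := fun w hw => c w hw) w hw).trans
        Set.subset_union_right)) (hwc w hw)
  | .lam M, ρ, n, y, ⟨b, x, hb, hj, hx⟩ => by
      obtain ⟨a, haρ, ha, hx'⟩ := exists_finite_mem_interp_update M (n + 1) hx
      exact ⟨a, haρ, ha, b, x, hb, hj, by rwa [envCons_update]⟩

theorem interp_lift : ∀ (M : Term) (d : ℕ) (ρ : ℕ → Set α),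
    interp G (M.lift d) ρ = interp G M (envDelete d ρ)
  | .var n, d, ρ => by
      by_cases h : n < d <;> simp [Term.lift, h, interp, envDelete]
  | .app M N, d, ρ => by
      simp only [Term.lift, interp, interp_lift M d ρ, interp_lift N d ρ]
  | .lam M, d, ρ => by
      simp only [Term.lift, interp, interp_lift M (d + 1), envCons_envDelete]

theorem interp_subst : ∀ (M : Term) (k : ℕ) (N : Term) (ρ : ℕ → Set α),
    interp G (M.subst k N) ρ = interp G M (envInsert k (interp G N ρ) ρ)
  | .var n, k, N, ρ => by
      rcases lt_trichotomy n k with h | rfl | h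
      · simp [Term.subst, h, h.ne, h.not_gt, interp, envInsert]
      · simp [Term.subst, interp, envInsert]
      · simp [Term.subst, h, h.ne', h.not_gt, interp, envInsert]
  | .app P Q, k, N, ρ => by
      simp only [Term.subst, interp, interp_subst P k N ρ, interp_subst Q k N ρ]
  | .lam P, k, N, ρ => by
      simp only [Term.subst, interp, interp_subst P (k + 1), interp_lift,
        envDelete_zero_envCons, envCons_envInsert]

theorem interp_app_lam (hv : G.Valid) (ht : G.Total) (P Q : Term) {ρ : ℕ → Set α}
    (hρ : ∀ n, ρ n ⊆ G.carrier) :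
    interp G (.app (.lam P) Q) ρ = interp G P (envCons (interp G Q ρ) ρ) := by
  ext y
  constructor
  · rintro ⟨a, -, haQ, z, hj, b, x, -, hj', hx⟩
    obtain ⟨rfl, rfl⟩ := hv.eq_of_j_eq_some hj hj'
    exact interp_mono_s13 P (envCons_mono_s13 haQ le_rfl) hx
  · intro hy
    obtain ⟨a, haQ, ha, hy'⟩ := exists_finite_mem_interp_update P 0 hy
    rw [update_envCons_zero] at hy'
    have haC : a ⊆ G.carrier := haQ.trans (interp_subset_carrier_s13 hv Q hρ)
    have hyC : y ∈ G.carrier := interp_subset_carrier_s13 hv P (envCons_subset haC hρ) hy'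
    have hj := PrePair.j_eq_some_pair ht ha haC hyC
    exact ⟨a, ha, haQ, _, hj, a, y, ha, hj, hy'⟩

theorem interp_eq_of_step (hv : G.Valid) (ht : G.Total) {M M' : Term} (h : M.Step M')
    {ρ : ℕ → Set α} (hρ : ∀ n, ρ n ⊆ G.carrier) : interp G M ρ = interp G M' ρ := by
  induction h generalizing ρ with
  | beta P Q => rw [interp_app_lam hv ht P Q hρ, interp_subst, envInsert_zero]
  | appL N _ ih => simp only [interp, ih hρ]
  | appR M _ ih => simp only [interp, ih hρ]
  | abs _ ih =>
    ext y
    simp only [interp, Set.mem_ofPred_eq]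
    refine exists₂_congr fun a x => and_congr_right fun _ => and_congr_right fun hj => ?_
    rw [ih (envCons_subset (hv.2.1 _ _ _ hj).2.1 hρ)]

theorem interp_eq_of_betaConv (hv : G.Valid) (ht : G.Total) {M N : Term} (h : M.BetaConv N)
    {ρ : ℕ → Set α} (hρ : ∀ n, ρ n ⊆ G.carrier) : interp G M ρ = interp G N ρ := by
  induction h with
  | of h => exact interp_eq_of_step hv ht h hρ
  | refl => rfl
  | symm _ ih => exact ih.symm
  | trans _ _ ih₁ ih₂ => exact ih₁.trans ih₂

end Interpretation

namespace Term

def lamIter : ℕ → Term → Term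
  | 0, B => B
  | n + 1, B => lam (lamIter n B)

def headVar : Term → ℕ
  | var n => n
  | app M _ => headVar M
  | lam M => headVar M

def numArgs : Term → ℕ
  | app M _ => numArgs M + 1
  | _ => 0

theorem IsHnf.exists_eq_lamIter {H : Term} (h : H.IsHnf) :
    ∃ n B, B.IsVarApp ∧ H = lamIter n B := by
  induction h with
  | head hB => exact ⟨0, _, hB, rfl⟩
  | abs _ ih =>
    obtain ⟨n, B, hB, rfl⟩ := ih
    exact ⟨n + 1, B, hB, rfl⟩

theorem IsVarApp.eq_var {B : Term} (hB : B.IsVarApp) (h : B.numArgs = 0) :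
    B = Term.var B.headVar := by
  cases hB with
  | var n => rfl
  | app => simp [numArgs] at h

end Term

namespace PrePair

variable {α : Type u} {G : PrePair α}

/-- `G.tower E x n = i(E (n-1), … i(E 1, i(E 0, x)) …)`, the element that an `n`-fold
abstraction produces from `x`. -/
def tower (G : PrePair α) (E : ℕ → Set α) (x : α) : ℕ → α
  | 0 => x
  | n + 1 => G.pair (E n) (G.tower E x n)

theorem tower_mem (hv : G.Valid) (ht : G.Total) {E : ℕ → Set α} (hE : G.FiniteEnv E)
    {x : α} (hx : x ∈ G.carrier) : ∀ n, G.tower E x n ∈ G.carrier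
  | 0 => hx
  | n + 1 => pair_mem hv ht (hE n).1 (hE n).2 (tower_mem hv ht hE hx n)

theorem pair_mem_interpC_Idt (hv : G.Valid) (ht : G.Total) {a : Set α} {x : α}
    (ha : a.Finite) (haC : a ⊆ G.carrier) (hx : x ∈ G.carrier) :
    G.pair a x ∈ interpC G Term.Idt ↔ x ∈ a := by
  constructor
  · rintro ⟨b, y, -, hj, hy⟩
    obtain ⟨rfl, rfl⟩ := hv.eq_of_j_eq_some hj (j_eq_some_pair ht ha haC hx)
    exact hy
  · exact fun hxa => ⟨a, x, ha, j_eq_some_pair ht ha haC hx, hxa⟩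

theorem tower_mem_interp_lamIter (hv : G.Valid) (ht : G.Total) {E : ℕ → Set α} (hE : G.FiniteEnv E)
    {x : α} (hx : x ∈ G.carrier) {B : Term} (hB : x ∈ interp G B E) :
    ∀ n, G.tower E x n ∈ interp G (B.lamIter n) fun i => E (i + n)
  | 0 => hB
  | n + 1 => by
    have henv : envCons (E n) (fun i => E (i + (n + 1))) = fun i => E (i + n) := by
      funext i
      cases i with
      | zero => simp [envCons]
      | succ i => exact congrArg E (by omega)
    refine ⟨E n, _, (hE n).1, j_eq_some_pair ht (hE n).1 (hE n).2 (tower_mem hv ht hE hx n), ?_⟩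
    rw [henv]
    exact tower_mem_interp_lamIter hv ht hE hx hB n

theorem mem_interp_of_isVarApp (hv : G.Valid) (ht : G.Total) {B : Term} (hB : B.IsVarApp)
    {ρ : ℕ → Set α} {x : α} (hx : x ∈ G.carrier)
    (h : (G.pair ∅)^[B.numArgs] x ∈ ρ B.headVar) : x ∈ interp G B ρ := by
  induction hB generalizing x with
  | var n => exact h
  | app N _ ih =>
    have hj := j_eq_some_pair ht Set.finite_empty (Set.empty_subset _) hx
    exact ⟨∅, Set.finite_empty, Set.empty_subset _, _, hj,
      ih (mapsTo_pair_empty hv ht hx) h⟩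

section BelowIdt

variable {n : ℕ} {B : Term}

theorem tower_mem_interpC_Idt (hv : G.Valid) (ht : G.Total) (hB : B.IsVarApp)
    (hsem : ∀ ρ : ℕ → Set α, (∀ i, ρ i ⊆ G.carrier) →
      interp G (B.lamIter n) ρ ⊆ interpC G Term.Idt)
    {E : ℕ → Set α} (hE : G.FiniteEnv E) {x : α} (hx : x ∈ G.carrier)
    (hhead : (G.pair ∅)^[B.numArgs] x ∈ E B.headVar) : G.tower E x n ∈ interpC G Term.Idt :=
  hsem _ (fun i => (hE (i + n)).2) <|
    tower_mem_interp_lamIter hv ht hE hx (mem_interp_of_isVarApp hv ht hB hx hhead) n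

theorem eq_headVar_add_one_of_lamIter_subset_Idt (hv : G.Valid) (ht : G.Total)
    (hB : B.IsVarApp)
    (hsem : ∀ ρ : ℕ → Set α, (∀ i, ρ i ⊆ G.carrier) →
      interp G (B.lamIter n) ρ ⊆ interpC G Term.Idt) :
    n = B.headVar + 1 := by
  by_contra hn
  obtain ⟨a₀, ha₀⟩ := hv.1
  have hu := mapsTo_pair_empty hv ht ha₀
  set u := G.pair ∅ a₀
  set E := update (fun _ => (∅ : Set α)) B.headVar {(G.pair ∅)^[B.numArgs] u}
  have hE : G.FiniteEnv E :=
    finiteEnv_empty.update_singleton _ ((mapsTo_pair_empty hv ht).iterate _ hu)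
  have hI := tower_mem_interpC_Idt hv ht hB hsem hE hu (by simp [E])
  -- Either `n = 0`, or the outermost abstraction binds a variable denoting `∅`.
  obtain ⟨z, hz, hzu⟩ : ∃ z ∈ G.carrier, G.tower E u n = G.pair ∅ z := by
    cases n with
    | zero => exact ⟨a₀, ha₀, rfl⟩
    | succ m =>
      have hEm : E m = ∅ := update_of_ne (by omega) _ _
      exact ⟨_, tower_mem hv ht hE hu m, by rw [tower, hEm]⟩
  rw [hzu, pair_mem_interpC_Idt hv ht Set.finite_empty (Set.empty_subset _) hz] at hI
  exact hI

theorem headVar_eq_zero_of_lamIter_subset_Idt (hv : G.Valid) (ht : G.Total)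
    (hB : B.IsVarApp) (hn : n = B.headVar + 1)
    (hsem : ∀ ρ : ℕ → Set α, (∀ i, ρ i ⊆ G.carrier) →
      interp G (B.lamIter n) ρ ⊆ interpC G Term.Idt) :
    B.headVar = 0 := by
  by_contra h₀
  obtain ⟨m, hm⟩ := Nat.exists_eq_succ_of_ne_zero h₀
  subst hn
  obtain ⟨a₀, ha₀⟩ := hv.1
  have hmaps := mapsTo_pair_empty hv ht
  have hu := hmaps ha₀
  set u := G.pair ∅ a₀
  set E := update (update (fun _ => (∅ : Set α)) m {a₀}) (m + 1)
    {(G.pair ∅)^[B.numArgs] u}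
  have hE : G.FiniteEnv E :=
    (finiteEnv_empty.update_singleton m ha₀).update_singleton _ (hmaps.iterate _ hu)
  have hEm : E m = {a₀} := by simp [E]
  have hEm₁ : E (m + 1) = {(G.pair ∅)^[B.numArgs] u} := by simp [E]
  have hI := tower_mem_interpC_Idt hv ht hB hsem hE hu (by simp [E, hm])
  rw [hm, tower, pair_mem_interpC_Idt hv ht (hE _).1 (hE _).2 (tower_mem hv ht hE hu _)] at hI
  -- `i({a₀}, _)` would have to equal `i(∅, _)`, the value of the head variable.
  rw [hEm₁, Set.mem_singleton_iff, tower, hEm, ← iterate_succ_apply,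
    iterate_succ_apply'] at hI
  exact Set.singleton_ne_empty a₀ (pair_inj hv ht (Set.finite_singleton _)
    (Set.singleton_subset_iff.2 ha₀) (tower_mem hv ht hE hu m) Set.finite_empty
    (Set.empty_subset _) (hmaps.iterate _ ha₀) hI).1

theorem numArgs_eq_zero_of_lamIter_subset_Idt (hv : G.Valid) (ht : G.Total)
    (hB : B.IsVarApp) (hv₀ : B.headVar = 0)
    (hsem : ∀ ρ : ℕ → Set α, (∀ i, ρ i ⊆ G.carrier) →
      interp G (B.lamIter 1) ρ ⊆ interpC G Term.Idt) :
    B.numArgs = 0 := by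
  by_contra hk
  obtain ⟨k, hk⟩ := Nat.exists_eq_succ_of_ne_zero hk
  obtain ⟨a₀, ha₀⟩ := hv.1
  have hmaps := mapsTo_pair_empty hv ht
  have ha₀' : {a₀} ⊆ G.carrier := Set.singleton_subset_iff.2 ha₀
  have hs := pair_mem hv ht (Set.finite_singleton a₀) ha₀' ha₀
  set s := G.pair {a₀} a₀
  set E := update (fun _ => (∅ : Set α)) 0 {(G.pair ∅)^[B.numArgs] s}
  have hE : G.FiniteEnv E := finiteEnv_empty.update_singleton _ (hmaps.iterate _ hs)
  have hI := tower_mem_interpC_Idt hv ht hB hsem hE hs (by simp [E, hv₀])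
  rw [tower, tower, pair_mem_interpC_Idt hv ht (hE 0).1 (hE 0).2 hs] at hI
  -- `s = i({a₀}, a₀)` would have to equal the value `i(∅, _)` of the head variable.
  simp only [E, update_self, Set.mem_singleton_iff, hk, iterate_succ_apply'] at hI
  exact Set.singleton_ne_empty a₀ (pair_inj hv ht (Set.finite_singleton _) ha₀' ha₀
    Set.finite_empty (Set.empty_subset _) (hmaps.iterate _ hs) hI).1

end BelowIdt

theorem eq_Idt_of_isHnf (hv : G.Valid) (ht : G.Total) {H : Term} (hH : H.IsHnf)
    (hsem : ∀ ρ : ℕ → Set α, (∀ i, ρ i ⊆ G.carrier) → interp G H ρ ⊆ interpC G Term.Idt) :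
    H = Term.Idt := by
  obtain ⟨n, B, hB, rfl⟩ := hH.exists_eq_lamIter
  have hn := eq_headVar_add_one_of_lamIter_subset_Idt hv ht hB hsem
  have hv₀ := headVar_eq_zero_of_lamIter_subset_Idt hv ht hB hn hsem
  rw [hv₀] at hn
  subst hn
  rw [hB.eq_var (numArgs_eq_zero_of_lamIter_subset_Idt hv ht hB hv₀ hsem), hv₀]
  rfl

end PrePair

/-- In any graph model, a closed term whose interpretation is
below that of `I = λx.x` is either β-convertible to `I` or unsolvable. -/
theorem beta_eq_I_or_unsolvable {α : Type u} (G : PrePair α)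
    (hG : PrePair.IsGraphModel G) (N : Term) (hN : Term.Closed N)
    (h : interpC G N ⊆ interpC G Term.Idt) :
    Term.BetaConv N Term.Idt ∨ Term.Unsolvable N := by
  refine or_iff_not_imp_right.2 fun hsolv => ?_
  obtain ⟨H, hNH, hH⟩ := not_not.1 hsolv
  obtain ⟨hv, ht, -⟩ := hG
  have hHI : H = Term.Idt := PrePair.eq_Idt_of_isHnf hv ht hH fun ρ hρ => by
    rw [← interp_eq_of_betaConv hv ht hNH hρ, interp_eq_interpC hN]
    exact h
  exact hHI ▸ hNH
end

section
/- Let G = (ℕ, ℓ) be a total pair where ℓ : ℕ* × ℕ → ℕ is an injective total recursive function (under a fixed effective encoding of finite subsets of ℕ and pairs) whose range is decidable. Then for every closed λ-term M in β-normal form, the interpretation ⟦M⟧^G is a decidable subset of ℕ. -/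
universe u v

open Term

/-! The interpretation is decided by recursion on the normal term, in environments of finite sets
coded by natural numbers. By injectivity, `y ∈ ⟦λx.M⟧` iff `y` is in the range of `ℓ` and, writing
`y = ℓ(a, x)`, `x ∈ ⟦M⟧` in the environment extended by `a`; the pair `(a, x)` is computed from `y`
by a left inverse of `ℓ`, which is computable because the range of `ℓ` is decidable. A normal
application `P N` has a head variable, and in a finite environment `⟦P⟧` is finite with a computable
bound (the elements of `⟦P N⟧` are read off those of `⟦P⟧` through the inverse of `ℓ`), so
`y ∈ ⟦P N⟧`, i.e. `ℓ(a, y) ∈ ⟦P⟧` for some finite `a ⊆ ⟦N⟧`, is a bounded search over `⟦P⟧`. -/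

namespace ComputablePred

variable {α β : Type*} [Primcodable α] [Primcodable β]

theorem comp {p : β → Prop} {h : α → β} (hp : ComputablePred p) (hh : Computable h) :
    ComputablePred fun a => p (h a) :=
  computable_of_manyOneReducible ⟨h, hh, fun _ => Iff.rfl⟩ hp

theorem and {p q : α → Prop} (hp : ComputablePred p) (hq : ComputablePred q) :
    ComputablePred fun a => p a ∧ q a := by
  classical
  exact Computable.computablePred <|
    (Primrec.and.to_comp.comp hp.decide hq.decide).of_eq fun a => by simp

theorem imp {p q : α → Prop} (hp : ComputablePred p) (hq : ComputablePred q) :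
    ComputablePred fun a => p a → q a := by
  classical
  exact Computable.computablePred <|
    (Primrec.or.to_comp.comp (Primrec.not.to_comp.comp hp.decide) hq.decide).of_eq
      fun a => by by_cases p a <;> simp [*]

theorem eq [DecidableEq β] {f g : α → β} (hf : Computable f) (hg : Computable g) :
    ComputablePred fun a => f a = g a :=
  Computable.computablePred <| Primrec.eq.decide.to_comp.comp hf hg

theorem exists_lt {p : α → ℕ → Prop} {B : α → ℕ} (hB : Computable B)
    (hp : ComputablePred fun x : α × ℕ => p x.1 x.2) :
    ComputablePred fun a => ∃ n < B a, p a n := by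
  classical
  open Computable in
  have hstep : Computable₂ fun (a : α) (s : ℕ × Bool) => s.2 || decide (p a s.1) :=
    (Primrec.or.to_comp.comp (snd.comp snd) (hp.decide.comp (fst.pair (fst.comp snd)))).to₂
  refine Computable.computablePred <| (Computable.nat_rec hB (.const false) hstep).of_eq
    fun a => ?_
  induction B a with
  | zero => simp
  | succ n ih => simp only [Nat.exists_lt_succ_right, Bool.decide_or, ← ih]

theorem forall_lt {p : α → ℕ → Prop} {B : α → ℕ} (hB : Computable B)
    (hp : ComputablePred fun x : α × ℕ => p x.1 x.2) :
    ComputablePred fun a => ∀ n < B a, p a n :=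
  (exists_lt (p := fun a n => ¬ p a n) hB hp.not).not.of_eq fun a => by simp

end ComputablePred

theorem Computable.finset_sup_range {α : Type*} [Primcodable α] {B : α → ℕ} {h : α → ℕ → ℕ}
    (hB : Computable B) (hh : Computable₂ h) :
    Computable fun a => (Finset.range (B a)).sup (h a) := by
  open Computable in
  have hstep : Computable₂ fun (a : α) (s : ℕ × ℕ) => max (h a s.1) s.2 :=
    (Primrec.nat_max.to_comp.comp (hh.comp fst (fst.comp snd)) (snd.comp snd)).to₂
  refine (Computable.nat_rec hB (.const 0) hstep).of_eq fun a => ?_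
  induction B a with
  | zero => rfl
  | succ n ih => rw [Finset.range_add_one, Finset.sup_insert, ← ih]

theorem Primrec.nat_testBit : Primrec₂ Nat.testBit := by
  have hpow : Primrec₂ ((· ^ ·) : ℕ → ℕ → ℕ) := Primrec₂.unpaired'.1 Nat.Primrec.pow
  refine (Primrec.eq.decide.comp (nat_mod.comp (nat_div.comp fst
    (hpow.comp (const 2) snd)) (const 2)) (const 1)).of_eq
    fun p => Nat.testBit_eq_decide_div_mod_eq.symm

theorem ComputablePred.nat_testBit {α : Type*} [Primcodable α] {e i : α → ℕ} (he : Computable e)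
    (hi : Computable i) : ComputablePred fun a => (e a).testBit (i a) :=
  computable_iff.2 ⟨_, Primrec.nat_testBit.to_comp.comp he hi, rfl⟩

theorem Computable.exists_leftInverse {β : Type*} [Primcodable β] [DecidableEq β] {f : ℕ → β}
    (hf : Computable f) (hinj : Function.Injective f)
    (hrg : ComputablePred fun y => ∃ n, f n = y) :
    ∃ g : β → ℕ, Computable g ∧ Function.LeftInverse g f := by
  classical
  have hex : ∀ y, ∃ n, (∃ m, f m = y) → f n = y := fun y =>
    (em (∃ m, f m = y)).elim (fun ⟨m, hm⟩ => ⟨m, fun _ => hm⟩) fun h => ⟨0, fun h' => absurd h' h⟩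
  refine ⟨fun y => Nat.find (hex y), Computable.find ?_ hex, fun n => hinj ?_⟩
  · exact (hrg.comp .fst).imp (ComputablePred.eq (hf.comp .snd) .fst)
  · exact Nat.find_spec (hex (f n)) ⟨n, rfl⟩

theorem Function.LeftInverse.exists_apply_eq_and_iff {α β : Type*} {f : α → β} {g : β → α}
    (hgf : Function.LeftInverse g f) {p : α → Prop} {y : β} :
    (∃ n, f n = y ∧ p n) ↔ f (g y) = y ∧ p (g y) := by
  constructor
  · rintro ⟨n, rfl, hn⟩
    rw [hgf n]
    exact ⟨rfl, hn⟩
  · exact fun h => ⟨g y, h⟩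

theorem Finset.mem_equivBitIndices {e i : ℕ} : i ∈ equivBitIndices e ↔ e.testBit i := by
  simp

theorem Finset.lt_of_mem_equivBitIndices {e i : ℕ} (hi : i ∈ equivBitIndices e) : i < e :=
  Nat.lt_two_pow_self.trans_le (Nat.ge_two_pow_of_testBit (mem_equivBitIndices.1 hi))

theorem Finset.coe_equivBitIndices_subset_iff {e : ℕ} {s : Set ℕ} :
    ↑(equivBitIndices e) ⊆ s ↔ ∀ i < e, e.testBit i → i ∈ s :=
  ⟨fun h _ _ hi => h (mem_equivBitIndices.2 hi), fun h i hi =>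
    h i (lt_of_mem_equivBitIndices hi) (mem_equivBitIndices.1 hi)⟩

theorem Set.exists_finite_iff_exists_equivBitIndices {p : Set ℕ → Prop} :
    (∃ a : Set ℕ, a.Finite ∧ p a) ↔ ∃ e, p ↑(Finset.equivBitIndices e) := by
  rw [exists_finite_iff_finset, ← Finset.equivBitIndices.exists_congr_right]

theorem encF_equivBitIndices (e : ℕ) : encF (Finset.equivBitIndices e) = e :=
  Finset.equivBitIndices.symm_apply_apply e

/-- Environments of finite sets, coded by lists of codes `encF`; missing entries are `∅`. -/
def codeEnv (L : List ℕ) : ℕ → Set ℕ := fun n => ↑(Finset.equivBitIndices (L.getD n 0))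

theorem codeEnv_nil : codeEnv [] = fun _ => ∅ := by
  funext n
  simp [codeEnv]

theorem codeEnv_cons (e : ℕ) (L : List ℕ) :
    codeEnv (e :: L) = envCons ↑(Finset.equivBitIndices e) (codeEnv L) := by
  funext n
  cases n <;> rfl

theorem Term.isVarApp_of_isNormal {M : Term} (hM : IsNormal M) (hlam : ∀ P, M ≠ lam P) :
    IsVarApp M := by
  induction M with
  | var n => exact .var n
  | lam P _ => exact absurd rfl (hlam P)
  | app P N ihP _ => exact .app N (ihP hM.2.1 hM.1)

def PrePair.IsPresentedBy (Q : PrePair ℕ) (f : ℕ → ℕ) : Prop :=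
  ∀ (a : Finset ℕ) (x : ℕ), Q.j (↑a, x) = some (f (Nat.pair (encF a) x))

namespace PrePair.IsPresentedBy

variable {Q : PrePair ℕ} {f g : ℕ → ℕ}

theorem j_coe_equivBitIndices (hj : Q.IsPresentedBy f) (e x : ℕ) :
    Q.j (↑(Finset.equivBitIndices e), x) = some (f (Nat.pair e x)) := by
  rw [hj, encF_equivBitIndices]

theorem mem_interp_lam_iff (hj : Q.IsPresentedBy f) {M : Term} {ρ : ℕ → Set ℕ} {y : ℕ} :
    y ∈ interp Q (lam M) ρ ↔
      ∃ n, f n = y ∧ n.unpair.2 ∈ interp Q M (envCons ↑(Finset.equivBitIndices n.unpair.1) ρ) := by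
  change (∃ a x, a.Finite ∧ Q.j (a, x) = some y ∧ x ∈ interp Q M (envCons a ρ)) ↔ _
  simp only [exists_and_left, Set.exists_finite_iff_exists_equivBitIndices,
    hj.j_coe_equivBitIndices, Option.some_inj]
  constructor
  · rintro ⟨e, x, hy, hx⟩
    exact ⟨Nat.pair e x, hy, by rwa [Nat.unpair_pair]⟩
  · rintro ⟨n, hy, hx⟩
    exact ⟨n.unpair.1, n.unpair.2, by rwa [Nat.pair_unpair], hx⟩

theorem mem_interp_app_iff (hj : Q.IsPresentedBy f) {P N : Term} {ρ : ℕ → Set ℕ} {y : ℕ} :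
    y ∈ interp Q (app P N) ρ ↔
      ∃ e, ↑(Finset.equivBitIndices e) ⊆ interp Q N ρ ∧ f (Nat.pair e y) ∈ interp Q P ρ := by
  change (∃ a, a.Finite ∧ a ⊆ interp Q N ρ ∧ ∃ z, Q.j (a, y) = some z ∧ z ∈ interp Q P ρ) ↔ _
  simp only [Set.exists_finite_iff_exists_equivBitIndices, hj.j_coe_equivBitIndices,
    Option.some_inj, exists_eq_left']

theorem mem_interp_app_iff_exists_lt (hj : Q.IsPresentedBy f) (hgf : Function.LeftInverse g f)
    {P N : Term} {ρ : ℕ → Set ℕ} {b : ℕ} (hb : interp Q P ρ ⊆ Set.Iio b) {y : ℕ} :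
    y ∈ interp Q (app P N) ρ ↔ ∃ z < b, z ∈ interp Q P ρ ∧ f (g z) = z ∧ (g z).unpair.2 = y ∧
      ↑(Finset.equivBitIndices (g z).unpair.1) ⊆ interp Q N ρ := by
  rw [hj.mem_interp_app_iff]
  constructor
  · rintro ⟨e, hN, hP⟩
    exact ⟨_, hb hP, hP, by rw [hgf], by rw [hgf, Nat.unpair_pair],
      by rwa [hgf, Nat.unpair_pair]⟩
  · rintro ⟨z, -, hP, hz, rfl, hN⟩
    exact ⟨_, hN, by rwa [Nat.pair_unpair, hz]⟩

theorem exists_computable_bound_interp (hj : Q.IsPresentedBy f) (hg : Computable g)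
    (hgf : Function.LeftInverse g f) {M : Term} (hM : IsVarApp M) :
    ∃ B : List ℕ → ℕ, Computable B ∧ ∀ L, interp Q M (codeEnv L) ⊆ Set.Iio (B L) := by
  open Computable in
  induction hM with
  | var n =>
    exact ⟨fun L => L.getD n 0, (Primrec.list_getD 0).to_comp.comp .id (const n),
      fun L _ hi => Finset.lt_of_mem_equivBitIndices hi⟩
  | app N _ ih =>
    obtain ⟨B, hB, hPB⟩ := ih
    refine ⟨fun L => (Finset.range (B L)).sup fun z => (g z).unpair.2 + 1,
      Computable.finset_sup_range hB ?_, fun L y hy => ?_⟩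
    · exact (succ.comp (snd.comp (unpair.comp (hg.comp snd)))).to₂
    · obtain ⟨e, -, hz⟩ := hj.mem_interp_app_iff.1 hy
      have hle := Finset.le_sup (f := fun z => (g z).unpair.2 + 1)
        (Finset.mem_range.2 (hPB L hz))
      rw [hgf, Nat.unpair_pair] at hle
      exact hle

theorem computablePred_mem_interp_codeEnv (hj : Q.IsPresentedBy f) (hf : Computable f)
    (hg : Computable g) (hgf : Function.LeftInverse g f) {M : Term} (hM : IsNormal M) :
    ComputablePred fun p : List ℕ × ℕ => p.2 ∈ interp Q M (codeEnv p.1) := by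
  open Computable in
  induction M with
  | var n =>
    exact (ComputablePred.nat_testBit ((Primrec.list_getD 0).to_comp.comp fst (const n))
      snd).of_eq fun _ => Finset.mem_equivBitIndices.symm
  | lam M ih =>
    have hgy : Computable fun p : List ℕ × ℕ => (g p.2).unpair := unpair.comp (hg.comp snd)
    have hdecode : Computable fun p : List ℕ × ℕ => ((g p.2).unpair.1 :: p.1, (g p.2).unpair.2) :=
      (list_cons.comp (fst.comp hgy) fst).pair (snd.comp hgy)
    refine ((ComputablePred.eq (hf.comp (hg.comp snd)) snd).and ((ih hM).comp hdecode)).of_eq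
      fun p => ?_
    rw [hj.mem_interp_lam_iff, hgf.exists_apply_eq_and_iff, codeEnv_cons]
  | app P N ihP ihN =>
    obtain ⟨hPlam, hP, hN⟩ := hM
    obtain ⟨B, hB, hPB⟩ := hj.exists_computable_bound_interp hg hgf (isVarApp_of_isNormal hP hPlam)
    refine (ComputablePred.exists_lt (hB.comp fst) ?_).of_eq fun p =>
      (hj.mem_interp_app_iff_exists_lt hgf (hPB p.1)).symm
    have hgz : Computable fun x : (List ℕ × ℕ) × ℕ => (g x.2).unpair := unpair.comp (hg.comp snd)
    have hsub : ComputablePred fun x : (List ℕ × ℕ) × ℕ =>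
        ↑(Finset.equivBitIndices (g x.2).unpair.1) ⊆ interp Q N (codeEnv x.1.1) := by
      refine (ComputablePred.forall_lt (fst.comp hgz) ?_).of_eq fun x =>
        Finset.coe_equivBitIndices_subset_iff.symm
      exact (ComputablePred.nat_testBit (fst.comp (hgz.comp fst)) snd).imp
        ((ihN hN).comp ((fst.comp (fst.comp fst)).pair snd))
    exact ((ihP hP).comp ((fst.comp fst).pair snd)).and <|
      (ComputablePred.eq (hf.comp (hg.comp snd)) snd).and <|
      (ComputablePred.eq (snd.comp hgz) (snd.comp fst)).and hsub

end PrePair.IsPresentedBy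

theorem normal_interp_decidable_general (Q : PrePair ℕ)
    (f : ℕ → ℕ) (hf : Computable f) (hinj : Function.Injective f)
    (hrg : ComputablePred fun y => ∃ n, f n = y)
    (hj : ∀ (a : Finset ℕ) (x : ℕ), Q.j (↑a, x) = some (f (Nat.pair (encF a) x)))
    (M : Term) (hMn : Term.IsNormal M) :
    ComputablePred (· ∈ interpC Q M) := by
  obtain ⟨g, hg, hgf⟩ := hf.exists_leftInverse hinj hrg
  have hdec := PrePair.IsPresentedBy.computablePred_mem_interp_codeEnv hj hf hg hgf hMn
  refine (hdec.comp ((Computable.const []).pair .id)).of_eq fun y => ?_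
  rw [codeEnv_nil]
  rfl

/-- In the graph model generated by a total pair `(ℕ, ℓ)`
with `ℓ` total recursive, injective and with decidable range, the
interpretation of every closed β-normal term is a decidable subset of `ℕ`. -/
theorem normal_interp_decidable (Q : PrePair ℕ) (hQ : Q.Valid)
    (hcar : Q.carrier = Set.univ)
    (f : ℕ → ℕ) (hf : Computable f) (hinj : Function.Injective f)
    (hrg : ComputablePred fun y => ∃ n, f n = y)
    (hj : ∀ (a : Finset ℕ) (x : ℕ), Q.j (↑a, x) = some (f (Nat.pair (encF a) x)))
    (M : Term) (hM : Term.Closed M) (hMn : Term.IsNormal M) :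
    ComputablePred (· ∈ interpC Q M) :=
  normal_interp_decidable_general Q f hf hinj hrg hj M hMn
end
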